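/- Suppose α_i = α and β_i = β for all i (symmetric weights within each type). For a fixed sequence started at s with early set {1,...,j−1} and tardy set {j,...,n}, the penalty change from a left shift by t is t·((j−1)α − (n−j+1)β); hence an optimal start time puts the transition index j at the smallest j with (j−1)α ≥ (n−j+1)β, i.e., j ≥ (nβ + α + β)/(α + β). -/

import Mathlib

/-!
Every job early at `s` stays early after shifting left by `t`, and every tardy job `i ≥ j` stays
(weakly) tardy as long as `t ≤ C_j - D`, since completion times increase with `i`. Hence on that
range each of the `j - 1` early jobs gains `α t` of penalty and each of the `n - j + 1` tardy jobs
loses `β t`; the sign of `(j - 1) α - (n - j + 1) β` decides whether the shift helps.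
-/

open Finset

/-- Penalty of a job completing at `C` with due date `D`. -/
def hingePenalty (α β D C : ℝ) : ℝ :=
  α * max 0 (D - C) + β * max 0 (C - D)

lemma hingePenalty_sub_of_le_of_le_due {α β D C C' : ℝ} (hC' : C' ≤ C) (hC : C ≤ D) :
    hingePenalty α β D C' - hingePenalty α β D C = α * (C - C') := by
  unfold hingePenalty
  rw [max_eq_right (by linarith : 0 ≤ D - C'), max_eq_left (by linarith : C' - D ≤ 0),
    max_eq_right (by linarith : 0 ≤ D - C), max_eq_left (by linarith : C - D ≤ 0)]
  ring

lemma hingePenalty_sub_of_due_le_of_le {α β D C C' : ℝ} (hC' : D ≤ C') (hC : C' ≤ C) :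
    hingePenalty α β D C' - hingePenalty α β D C = -(β * (C - C')) := by
  unfold hingePenalty
  rw [max_eq_left (by linarith : D - C' ≤ 0), max_eq_right (by linarith : 0 ≤ C' - D),
    max_eq_left (by linarith : D - C ≤ 0), max_eq_right (by linarith : 0 ≤ C - D)]
  ring

lemma sum_Icc_one_le_sum_Icc_one {P : ℕ → ℝ} {n i k : ℕ}
    (hP : ∀ l, 1 ≤ l → l ≤ n → 0 ≤ P l) (hik : i ≤ k) (hkn : k ≤ n) :
    ∑ l ∈ Icc 1 i, P l ≤ ∑ l ∈ Icc 1 k, P l :=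
  sum_le_sum_of_subset_of_nonneg (Icc_subset_Icc_right hik) fun l hl _ =>
    hP l (mem_Icc.1 hl).1 ((mem_Icc.1 hl).2.trans hkn)

lemma sum_Icc_one_of_step {n j : ℕ} {g : ℕ → ℝ} {a b : ℝ} (hj1 : 1 ≤ j) (hjn : j ≤ n)
    (ha : ∀ i, 1 ≤ i → i < j → g i = a) (hb : ∀ i, j ≤ i → i ≤ n → g i = b) :
    ∑ i ∈ Icc 1 n, g i = ((j : ℝ) - 1) * a + ((n : ℝ) - j + 1) * b := by
  have hIcc : Icc 1 n = Ioc 0 n := Icc_add_one_left_eq_Ioc 0 n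
  rw [hIcc, ← sum_Ioc_consecutive _ (Nat.zero_le (j - 1)) (by omega : j - 1 ≤ n),
    sum_congr rfl fun i hi => ha i (mem_Ioc.1 hi).1 (by have := (mem_Ioc.1 hi).2; omega),
    sum_congr rfl fun i hi => hb i (by have := (mem_Ioc.1 hi).1; omega) (mem_Ioc.1 hi).2,
    sum_const, sum_const, Nat.card_Ioc, Nat.card_Ioc, nsmul_eq_mul, nsmul_eq_mul,
    Nat.sub_zero, Nat.cast_sub hj1, (by omega : n - (j - 1) = n - j + 1), Nat.cast_add,
    Nat.cast_sub hjn]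
  push_cast
  ring

theorem stmt19_general (n j : ℕ) (P : ℕ → ℝ) (α β D s : ℝ)
    (hP : ∀ i, 1 ≤ i → i ≤ n → 0 < P i)
    (hj1 : 1 ≤ j) (hjn : j ≤ n)
    (hearly : ∀ i, 1 ≤ i → i < j → s + ∑ l ∈ Finset.Icc 1 i, P l ≤ D)
    (F : ℝ → ℝ)
    (hF : ∀ t : ℝ, F t = ∑ i ∈ Finset.Icc 1 n,
        (α * max 0 (D - (t + ∑ l ∈ Finset.Icc 1 i, P l)) +
          β * max 0 ((t + ∑ l ∈ Finset.Icc 1 i, P l) - D))) :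
    (∀ t : ℝ, 0 < t → t ≤ min s ((s + ∑ l ∈ Finset.Icc 1 j, P l) - D) →
        F (s - t) - F s = t * (((j : ℝ) - 1) * α - ((n : ℝ) - (j : ℝ) + 1) * β)) ∧
    (((j : ℝ) - 1) * α ≥ ((n : ℝ) - (j : ℝ) + 1) * β →
      ∀ t : ℝ, 0 < t → t ≤ min s ((s + ∑ l ∈ Finset.Icc 1 j, P l) - D) →
        F s ≤ F (s - t)) ∧
    (((j : ℝ) - 1) * α < ((n : ℝ) - (j : ℝ) + 1) * β →
      ∀ t : ℝ, 0 < t → t ≤ min s ((s + ∑ l ∈ Finset.Icc 1 j, P l) - D) →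
        F (s - t) < F s) := by
  have shift : ∀ t : ℝ, 0 < t → t ≤ min s ((s + ∑ l ∈ Icc 1 j, P l) - D) →
      F (s - t) - F s = t * (((j : ℝ) - 1) * α - ((n : ℝ) - (j : ℝ) + 1) * β) := by
    intro t ht htle
    have htj : t ≤ (s + ∑ l ∈ Icc 1 j, P l) - D := htle.trans (min_le_right _ _)
    rw [hF, hF, ← sum_sub_distrib, sum_Icc_one_of_step (a := α * t) (b := -(β * t)) hj1 hjn]
    · ring
    · intro i hi1 hij
      have h := hingePenalty_sub_of_le_of_le_due (α := α) (β := β)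
        (by linarith : s - t + ∑ l ∈ Icc 1 i, P l ≤ s + ∑ l ∈ Icc 1 i, P l) (hearly i hi1 hij)
      simpa only [hingePenalty, sub_add_eq_add_sub, sub_sub_cancel] using h
    · intro i hji hin
      have hmono := sum_Icc_one_le_sum_Icc_one (fun l h1 h2 => (hP l h1 h2).le) hji hin
      have h := hingePenalty_sub_of_due_le_of_le (α := α) (β := β)
        (by linarith : D ≤ s - t + ∑ l ∈ Icc 1 i, P l)
        (by linarith : s - t + ∑ l ∈ Icc 1 i, P l ≤ s + ∑ l ∈ Icc 1 i, P l)
      simpa only [hingePenalty, sub_add_eq_add_sub, sub_sub_cancel] using h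
  refine ⟨shift, fun h t ht htle => ?_, fun h t ht htle => ?_⟩
  · nlinarith [shift t ht htle]
  · nlinarith [shift t ht htle]

/-- With symmetric weights `α` (earliness) and `β` (tardiness)
and transition index `j` at start time `s` (jobs `1,…,j-1` early, jobs
`j,…,n` tardy), a left shift by `t ∈ (0, min s (C_j - D)]` changes the penalty
by `t * ((j-1)·α - (n-j+1)·β)`; hence if `(j-1)·α ≥ (n-j+1)·β` no such left
shift improves the solution, while if `(j-1)·α < (n-j+1)·β` every such left
shift improves it — so an optimal start time puts the transition at the
smallest `j` with `(j-1)·α ≥ (n-j+1)·β`. -/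
theorem stmt19 (n j : ℕ) (P : ℕ → ℝ) (α β D s : ℝ)
    (hP : ∀ i, 1 ≤ i → i ≤ n → 0 < P i)
    (hα : 0 < α) (hβ : 0 < β)
    (hs : 0 ≤ s)
    (hj1 : 1 ≤ j) (hjn : j ≤ n)
    (hearly : ∀ i, 1 ≤ i → i < j → s + ∑ l ∈ Finset.Icc 1 i, P l ≤ D)
    (htardy : ∀ i, j ≤ i → i ≤ n → s + ∑ l ∈ Finset.Icc 1 i, P l > D)
    (F : ℝ → ℝ)
    (hF : ∀ t : ℝ, F t = ∑ i ∈ Finset.Icc 1 n,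
        (α * max 0 (D - (t + ∑ l ∈ Finset.Icc 1 i, P l)) +
          β * max 0 ((t + ∑ l ∈ Finset.Icc 1 i, P l) - D))) :
    (∀ t : ℝ, 0 < t → t ≤ min s ((s + ∑ l ∈ Finset.Icc 1 j, P l) - D) →
        F (s - t) - F s = t * (((j : ℝ) - 1) * α - ((n : ℝ) - (j : ℝ) + 1) * β)) ∧
    (((j : ℝ) - 1) * α ≥ ((n : ℝ) - (j : ℝ) + 1) * β →
      ∀ t : ℝ, 0 < t → t ≤ min s ((s + ∑ l ∈ Finset.Icc 1 j, P l) - D) →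
        F s ≤ F (s - t)) ∧
    (((j : ℝ) - 1) * α < ((n : ℝ) - (j : ℝ) + 1) * β →
      ∀ t : ℝ, 0 < t → t ≤ min s ((s + ∑ l ∈ Finset.Icc 1 j, P l) - D) →
        F (s - t) < F s) :=
  stmt19_general n j P α β D s hP hj1 hjn hearly F hF
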